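/- Let G be a locally finite graph (finite or infinite, every vertex of finite degree) without an isolated edge, and let L be a set of finite lists for G. For a subgraph H of G, let L_H denote the set of lists obtained from L by restriction to V(H) ∪ E(H). If every finite induced subgraph H of G that is not isomorphic to K₂ has an L_H-weighting, then G has an L-weighting. -/
import Mathlib


/-- The weighted degree of a vertex `v` under a total weighting `(ωV, ωE)`:
`ω(v) + Σ_{w ∈ N(v)} ω(vw)` (a natural number, for locally finite graphs). -/
noncomputable def weightedDeg {V : Type u} (G : SimpleGraph V)
    (ωV : V → ℕ) (ωE : Sym2 V → ℕ) (v : V) : ℕ :=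
  ωV v + ∑ᶠ w ∈ G.neighborSet v, ωE s(v, w)

/-- `(ωV, ωE)` is an `L`-weighting of `G` from the lists `(LV, LE)`: it is a total weighting
from the lists, and for every edge `uv` the weighted degrees of `u` and `v` differ. -/
def IsLWeighting {V : Type u} (G : SimpleGraph V) (LV : V → Set ℕ) (LE : Sym2 V → Set ℕ)
    (ωV : V → ℕ) (ωE : Sym2 V → ℕ) : Prop :=
  (∀ v : V, ωV v ∈ LV v) ∧
  (∀ e ∈ G.edgeSet, ωE e ∈ LE e) ∧
  ∀ u v : V, G.Adj u v → weightedDeg G ωV ωE u ≠ weightedDeg G ωV ωE v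

lemma weightedDeg_eq_sum {V : Type u} (G : SimpleGraph V) (ωV : V → ℕ) (ωE : Sym2 V → ℕ)
    (v : V) (h : (G.neighborSet v).Finite) :
    weightedDeg G ωV ωE v = ωV v + ∑ w ∈ h.toFinset, ωE s(v, w) := by
  rw [weightedDeg, ← finsum_mem_coe_finset, Set.Finite.coe_toFinset]

/-- Let `G` be a locally finite graph (finite or infinite) without an isolated edge, and let
`L` be a set of nonempty finite lists for `G`. If every finite induced subgraph of `G` that is
not isomorphic to `K₂` has a weighting from the restricted lists, then `G` has an
`L`-weighting. -/
theorem stmt_4 {V : Type u} (G : SimpleGraph V)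
    (hlf : ∀ v : V, (G.neighborSet v).Finite)
    (LV : V → Set ℕ) (LE : Sym2 V → Set ℕ)
    (hLVfin : ∀ v : V, (LV v).Finite) (hLVne : ∀ v : V, (LV v).Nonempty)
    (hLEfin : ∀ e : Sym2 V, (LE e).Finite) (hLEne : ∀ e : Sym2 V, (LE e).Nonempty)
    (hiso : ∀ u v : V, G.Adj u v →
      ¬(G.neighborSet u = {v} ∧ G.neighborSet v = {u}))
    (hind : ∀ S : Set V, S.Finite →
      ¬Nonempty (G.induce S ≃g (⊤ : SimpleGraph (Fin 2))) →
      ∃ (ωV : S → ℕ) (ωE : Sym2 S → ℕ),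
        IsLWeighting (G.induce S) (fun v => LV (v : V))
          (fun e => LE (e.map (Subtype.val : S → V))) ωV ωE) :
    ∃ (ωV : V → ℕ) (ωE : Sym2 V → ℕ), IsLWeighting G LV LE ωV ωE := by
  classical
  haveI hFV : ∀ v, Finite ↥(LV v) := fun v => (hLVfin v).to_subtype
  haveI hFE : ∀ e, Finite ↥(LE e) := fun e => (hLEfin e).to_subtype
  haveI hNV : ∀ v, Nonempty ↥(LV v) := fun v => (hLVne v).to_subtype
  haveI hNE : ∀ e, Nonempty ↥(LE e) := fun e => (hLEne e).to_subtype
  let X := (∀ v : V, ↥(LV v)) × (∀ e : Sym2 V, ↥(LE e))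
  let deg : X → V → ℕ := fun x v => (x.1 v : ℕ) + ∑ w ∈ (hlf v).toFinset, (x.2 s(v, w) : ℕ)
  let I := {p : V × V // G.Adj p.1 p.2}
  let C : I → Set X := fun i => {x | deg x i.1.1 ≠ deg x i.1.2}
  have hdegc : ∀ v : V, Continuous (fun x : X => deg x v) := by
    intro v
    apply Continuous.add
    · exact continuous_subtype_val.comp ((continuous_apply v).comp continuous_fst)
    · apply continuous_finset_sum
      intro w _
      exact continuous_subtype_val.comp ((continuous_apply s(v, w)).comp continuous_snd)
  have hC : ∀ i, IsClosed (C i) := by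
    intro i
    have he : C i = {x : X | deg x i.1.1 = deg x i.1.2}ᶜ := rfl
    rw [he, isClosed_compl_iff]
    have he2 : {x : X | deg x i.1.1 = deg x i.1.2}
        = ⋃ n : ℕ, (fun x => deg x i.1.1) ⁻¹' {n} ∩ (fun x => deg x i.1.2) ⁻¹' {n} := by
      ext x
      simp only [Set.mem_setOf_eq, Set.mem_iUnion, Set.mem_inter_iff, Set.mem_preimage,
        Set.mem_singleton_iff]
      exact ⟨fun h => ⟨deg x i.1.1, rfl, h.symm⟩, fun ⟨n, h1, h2⟩ => h1.trans h2.symm⟩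
    rw [he2]
    exact isOpen_iUnion fun n =>
      ((isOpen_discrete _).preimage (hdegc _)).inter ((isOpen_discrete _).preimage (hdegc _))
  have hFIP : ∀ t : Finset I, (⋂ i ∈ t, C i).Nonempty := by
    intro t
    rcases t.eq_empty_or_nonempty with rfl | ⟨i₀, hi₀⟩
    · simp only [Finset.notMem_empty, Set.iInter_of_empty, Set.iInter_univ]
      exact Set.univ_nonempty
    · set S : Set V := ⋃ i ∈ (↑t : Set I),
        ({i.1.1, i.1.2} ∪ G.neighborSet i.1.1 ∪ G.neighborSet i.1.2) with hSdef
      have hSfin : S.Finite :=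
        Set.Finite.biUnion t.finite_toSet
          (fun i _ => (((Set.finite_singleton _).insert _).union (hlf _)).union (hlf _))
      have hmem : ∀ i ∈ t, i.1.1 ∈ S ∧ i.1.2 ∈ S ∧
          G.neighborSet i.1.1 ⊆ S ∧ G.neighborSet i.1.2 ⊆ S := by
        intro i hi
        have hsub : ({i.1.1, i.1.2} ∪ G.neighborSet i.1.1 ∪ G.neighborSet i.1.2) ⊆ S :=
          fun w hw => Set.mem_biUnion (show i ∈ (↑t : Set I) from hi) hw
        exact ⟨hsub (Or.inl (Or.inl (Or.inl rfl))), hsub (Or.inl (Or.inl (Or.inr rfl))),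
          fun w hw => hsub (Or.inl (Or.inr hw)), fun w hw => hsub (Or.inr hw)⟩
      have hnotK2 : ¬Nonempty (G.induce S ≃g (⊤ : SimpleGraph (Fin 2))) := by
        rintro ⟨φ⟩
        have hadj : G.Adj i₀.1.1 i₀.1.2 := i₀.2
        obtain ⟨hu, hv, hNu, hNv⟩ := hmem i₀ hi₀
        have hne : i₀.1.1 ≠ i₀.1.2 := hadj.ne
        have hsub2 : ∀ w ∈ S, w = i₀.1.1 ∨ w = i₀.1.2 := by
          intro w hw
          by_contra hcon
          push_neg at hcon
          set e := φ.toEquiv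
          have h1 : (e ⟨w, hw⟩).val ≠ (e ⟨i₀.1.1, hu⟩).val := by
            intro h
            exact hcon.1 (congrArg Subtype.val (e.injective (Fin.val_injective h)))
          have h2 : (e ⟨w, hw⟩).val ≠ (e ⟨i₀.1.2, hv⟩).val := by
            intro h
            exact hcon.2 (congrArg Subtype.val (e.injective (Fin.val_injective h)))
          have h3 : (e ⟨i₀.1.1, hu⟩).val ≠ (e ⟨i₀.1.2, hv⟩).val := by
            intro h
            exact hne (congrArg Subtype.val (e.injective (Fin.val_injective h)))
          have l1 := (e ⟨w, hw⟩).isLt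
          have l2 := (e ⟨i₀.1.1, hu⟩).isLt
          have l3 := (e ⟨i₀.1.2, hv⟩).isLt
          omega
        have hNu' : G.neighborSet i₀.1.1 = {i₀.1.2} := by
          ext w
          simp only [Set.mem_singleton_iff]
          constructor
          · intro hw
            rcases hsub2 w (hNu hw) with rfl | rfl
            · exact absurd hw G.notMem_neighborSet_self
            · rfl
          · rintro rfl; exact hadj
        have hNv' : G.neighborSet i₀.1.2 = {i₀.1.1} := by
          ext w
          simp only [Set.mem_singleton_iff]
          constructor
          · intro hw
            rcases hsub2 w (hNv hw) with rfl | rfl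
            · rfl
            · exact absurd hw G.notMem_neighborSet_self
          · rintro rfl; exact hadj.symm
        exact hiso _ _ hadj ⟨hNu', hNv'⟩
      obtain ⟨ωVS, ωES, hW1, hW2, hW3⟩ := hind S hSfin hnotK2
      let P : Sym2 V → Prop := fun e =>
        ∃ f : Sym2 S, f ∈ (G.induce S).edgeSet ∧ Sym2.map Subtype.val f = e
      let ω2 : Sym2 V → ℕ := fun e => if h : P e then ωES h.choose else (hLEne e).choose
      have hω2mem : ∀ e, ω2 e ∈ LE e := by
        intro e
        by_cases h : P e
        · simp only [ω2, dif_pos h]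
          have key : ∀ f : Sym2 S, Sym2.map Subtype.val f = e →
              f ∈ (G.induce S).edgeSet → ωES f ∈ LE e := by
            rintro f rfl hf
            exact hW2 f hf
          exact key h.choose h.choose_spec.2 h.choose_spec.1
        · simp only [ω2, dif_neg h]
          exact (hLEne e).choose_spec
      have hω2val : ∀ (a b : S), G.Adj a.val b.val → ω2 s(a.val, b.val) = ωES s(a, b) := by
        intro a b hab
        have hP : P s(a.val, b.val) := by
          refine ⟨s(a, b), ?_, by simp⟩
          simp only [SimpleGraph.mem_edgeSet, SimpleGraph.comap_adj,
            Function.Embedding.coe_subtype]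
          exact hab
        simp only [ω2, dif_pos hP]
        have hch : hP.choose = s(a, b) :=
          Sym2.map.injective Subtype.val_injective (by rw [hP.choose_spec.2]; simp)
        rw [hch]
      let xV : ∀ v : V, ↥(LV v) := fun v =>
        if h : v ∈ S then ⟨ωVS ⟨v, h⟩, hW1 ⟨v, h⟩⟩
        else ⟨(hLVne v).choose, (hLVne v).choose_spec⟩
      let x : X := (xV, fun e => ⟨ω2 e, hω2mem e⟩)
      have hdeg : ∀ (u : V) (hu : u ∈ S), G.neighborSet u ⊆ S →
          deg x u = weightedDeg (G.induce S) ωVS ωES ⟨u, hu⟩ := by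
        intro u hu hNu
        have hNeq : (G.induce S).neighborSet ⟨u, hu⟩ = Subtype.val ⁻¹' G.neighborSet u := by
          ext w
          simp [SimpleGraph.neighborSet]
        have hfin' : ((G.induce S).neighborSet ⟨u, hu⟩).Finite := by
          rw [hNeq]
          exact Set.Finite.preimage Subtype.val_injective.injOn (hlf u)
        rw [weightedDeg_eq_sum _ _ _ _ hfin']
        have h1 : (xV u : ℕ) = ωVS ⟨u, hu⟩ := by simp [xV, dif_pos hu]
        show (xV u : ℕ) + ∑ w ∈ (hlf u).toFinset, ω2 s(u, w) = _
        rw [h1]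
        congr 1
        refine Finset.sum_bij' (fun w hw => (⟨w, hNu (by simpa using hw)⟩ : S))
          (fun w' _ => (w' : V)) ?_ ?_ ?_ ?_ ?_
        · intro w hw
          simp only [Set.Finite.mem_toFinset] at hw ⊢
          rw [hNeq]
          simpa using hw
        · intro w' hw'
          simp only [Set.Finite.mem_toFinset, hNeq] at hw' ⊢
          simpa using hw'
        · intro w hw; rfl
        · intro w' hw'; rfl
        · intro w hw
          simp only [Set.Finite.mem_toFinset, SimpleGraph.mem_neighborSet] at hw
          exact hω2val ⟨u, hu⟩ ⟨w, hNu hw⟩ hw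
      refine ⟨x, Set.mem_iInter₂.mpr fun i hi => ?_⟩
      obtain ⟨hu, hv, hNu, hNv⟩ := hmem i hi
      show deg x i.1.1 ≠ deg x i.1.2
      rw [hdeg _ hu hNu, hdeg _ hv hNv]
      refine hW3 ⟨i.1.1, hu⟩ ⟨i.1.2, hv⟩ ?_
      simp only [SimpleGraph.comap_adj, Function.Embedding.coe_subtype]
      exact i.2
  have hint : (⋂ i, C i).Nonempty := by
    by_contra h
    rw [Set.not_nonempty_iff_eq_empty] at h
    obtain ⟨t, ht⟩ := IsCompact.elim_finite_subfamily_closed (isCompact_univ (X := X)) C hC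
      (by rw [Set.univ_inter]; exact h)
    rw [Set.univ_inter] at ht
    exact (hFIP t).ne_empty ht
  obtain ⟨x, hx⟩ := hint
  refine ⟨fun v => (x.1 v : ℕ), fun e => (x.2 e : ℕ), fun v => (x.1 v).2,
    fun e _ => (x.2 e).2, ?_⟩
  intro u v huv
  have hxC : x ∈ C ⟨(u, v), huv⟩ := Set.mem_iInter.mp hx _
  rw [weightedDeg_eq_sum G _ _ u (hlf u), weightedDeg_eq_sum G _ _ v (hlf v)]
  exact hxC
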